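/- (Theorem 1, performance of the two-party encrypted controller.) Let k > ℓ ≥ 1. Let the plant be x_p(t+1) = A_p x_p(t) + B_p u(t), y(t) = C_p x_p(t), with x_p(0) = x_{p,0}, and let the controller matrices A ∈ ℝ^{n×n}, B ∈ ℝ^{n×p}, C ∈ ℝ^{m×n}, D ∈ ℝ^{m×p} and initial state x₀ ∈ ℝ^n have all entries in Q_{k,ℓ}; set Ā := 2^ℓ A, B̄ := 2^ℓ B, C̄ := 2^ℓ C, D̄ := 2^ℓ D (integer matrices). Let (x_p, x, u, y) be the nominal closed loop with x(0) = x₀, x(t+1) = A x(t) + B y(t), u(t) = C x(t) + D y(t). Let w : ℕ → {−1,0,1}^n be arbitrary and define the encrypted closed loop by x̂_p(0) = x_{p,0}, x̃(0) = 2^ℓ x₀, ŷ(t) = C_p x̂_p(t), ȳ(t) = ⌊2^ℓ ŷ(t)⌉ (elementwise rounding), x̃(t+1) = ⌊(Ā x̃(t) + B̄ ȳ(t))/2^ℓ⌉ + w(t), ũ(t) = C̄ x̃(t) + D̄ ȳ(t), û(t) = 2^{−2ℓ} ũ(t), x̂_p(t+1) = A_p x̂_p(t) + B_p û(t). Suppose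 there exist c ≥ 1 and γ ∈ (0,1) with ‖Φ^t‖ ≤ c γ^t for all t (induced 2-norm). Then for every ε > 0, if 2^ℓ · ε ≥ (c/(1 − γ)) · ((√p/2)(‖Γ‖·‖Υ‖ + ‖D‖) + 2√n·‖Υ‖) (equivalently, ℓ ≥ log₂ of the right-hand side divided by ε), then ‖u(t) − û(t)‖ ≤ ε for all t ∈ ℕ. -/

import Mathlib

/-!
Scaled by `2^{-ℓ}`, the encrypted controller is the nominal controller fed with the measurement
`2^{-ℓ} ȳ = ŷ + r`, where `|r_i| ≤ 2^{-ℓ}/2`, and with a state update that is off by at most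
`(3/2) 2^{-ℓ}` per entry (rounding plus the truncation error `w`). Hence the difference `e` of the
stacked states `(x_p, x)` of the two loops satisfies `e(t+1) = Φ e(t) + q(t)`, `e(0) = 0`, with
`‖q‖ ≤ 2^{-ℓ}(‖Γ‖ √p/2 + 3√n/2)`; summing `‖Φ^s‖ ≤ c γ^s` gives `‖e(t)‖ ≤ c ‖q‖/(1-γ)`, and the
input error is `Υ e(t) - D r(t)`.
-/

open scoped Matrix.Norms.L2Operator

/-- `Q_{k,ℓ}`: the set of `k`-bit fixed-point numbers with `ℓ`-bit fractional part,
`Q_{k,ℓ} = {2^{−ℓ} z : z ∈ ℤ, −2^{k−1} ≤ z < 2^{k−1}}`. -/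
def Qfix (k ℓ : ℕ) : Set ℝ :=
  {x | ∃ z : ℤ, -2 ^ (k - 1) ≤ z ∧ z < 2 ^ (k - 1) ∧ x = (2 : ℝ) ^ (-(ℓ : ℤ)) * z}

/-- The Euclidean (`ℓ²`) norm of a finitely-indexed real vector. -/
noncomputable def e2norm {ι : Type*} [Fintype ι] (v : ι → ℝ) : ℝ :=
  ‖(WithLp.equiv 2 (ι → ℝ)).symm v‖

open Matrix Finset

section e2norm

variable {ι κ : Type*} [Fintype ι] [Fintype κ]

lemma e2norm_nonneg (v : ι → ℝ) : 0 ≤ e2norm v := norm_nonneg _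

lemma e2norm_neg (v : ι → ℝ) : e2norm (-v) = e2norm v := norm_neg (WithLp.toLp 2 v)

lemma e2norm_add_le (v w : ι → ℝ) : e2norm (v + w) ≤ e2norm v + e2norm w :=
  norm_add_le _ _

lemma e2norm_sub_le (v w : ι → ℝ) : e2norm (v - w) ≤ e2norm v + e2norm w :=
  norm_sub_le (WithLp.toLp 2 v) (WithLp.toLp 2 w)

lemma e2norm_sum_le {α : Type*} (s : Finset α) (f : α → ι → ℝ) :
    e2norm (∑ a ∈ s, f a) ≤ ∑ a ∈ s, e2norm (f a) := by
  simp only [e2norm, WithLp.equiv_symm_apply, WithLp.toLp_sum]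
  exact norm_sum_le _ _

lemma e2norm_mulVec_le [DecidableEq κ] (M : Matrix ι κ ℝ) (v : κ → ℝ) :
    e2norm (M *ᵥ v) ≤ ‖M‖ * e2norm v :=
  M.l2_opNorm_mulVec (WithLp.toLp 2 v)

lemma e2norm_sumElim_zero_left (v : κ → ℝ) : e2norm (Sum.elim (0 : ι → ℝ) v) = e2norm v := by
  simp [e2norm, EuclideanSpace.norm_eq, Fintype.sum_sum_type]

lemma e2norm_le_sqrt_card_mul {v : ι → ℝ} {a : ℝ} (ha : 0 ≤ a) (h : ∀ i, |v i| ≤ a) :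
    e2norm v ≤ √(Fintype.card ι) * a := by
  have hsq : ∑ i, v i ^ 2 ≤ Fintype.card ι * a ^ 2 := by
    calc ∑ i, v i ^ 2 ≤ ∑ _i : ι, a ^ 2 :=
          sum_le_sum fun i _ => sq_le_sq' (abs_le.1 (h i)).1 (abs_le.1 (h i)).2
      _ = Fintype.card ι * a ^ 2 := by simp
  calc e2norm v = √(∑ i, v i ^ 2) := by simp [e2norm, EuclideanSpace.norm_eq]
    _ ≤ √(Fintype.card ι * a ^ 2) := Real.sqrt_le_sqrt hsq
    _ = √(Fintype.card ι) * a := by rw [Real.sqrt_mul (Nat.cast_nonneg _), Real.sqrt_sq ha]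

end e2norm

section StableRecursion

variable {N : Type*} [Fintype N] [DecidableEq N]

theorem eq_sum_pow_mulVec_of_recurrence (Φ : Matrix N N ℝ) {e q : ℕ → N → ℝ} (he0 : e 0 = 0)
    (he : ∀ t, e (t + 1) = Φ *ᵥ e t + q t) (t : ℕ) :
    e t = ∑ s ∈ range t, (Φ ^ s) *ᵥ q (t - 1 - s) := by
  induction t with
  | zero => simp [he0]
  | succ t ih =>
    rw [he, ih, mulVec_sum, sum_range_succ']
    congr 1
    · refine sum_congr rfl fun s hs => ?_
      rw [mulVec_mulVec, ← pow_succ', show t + 1 - 1 - (s + 1) = t - 1 - s by omega]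
    · simp

theorem e2norm_le_of_recurrence_of_pow_le (Φ : Matrix N N ℝ) {c γ δ : ℝ} (hc : 0 ≤ c) (hγ0 : 0 ≤ γ)
    (hγ1 : γ < 1) (hΦ : ∀ t : ℕ, ‖Φ ^ t‖ ≤ c * γ ^ t) {e q : ℕ → N → ℝ} (he0 : e 0 = 0)
    (he : ∀ t, e (t + 1) = Φ *ᵥ e t + q t) (hq : ∀ t, e2norm (q t) ≤ δ) (t : ℕ) :
    e2norm (e t) ≤ c * δ / (1 - γ) := by
  have hδ : 0 ≤ δ := (e2norm_nonneg _).trans (hq 0)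
  rw [eq_sum_pow_mulVec_of_recurrence Φ he0 he t]
  calc e2norm (∑ s ∈ range t, (Φ ^ s) *ᵥ q (t - 1 - s))
      ≤ ∑ s ∈ range t, ‖Φ ^ s‖ * e2norm (q (t - 1 - s)) :=
        (e2norm_sum_le _ _).trans (sum_le_sum fun s _ => e2norm_mulVec_le _ _)
    _ ≤ ∑ s ∈ range t, c * γ ^ s * δ :=
        sum_le_sum fun s _ => mul_le_mul (hΦ s) (hq _) (e2norm_nonneg _) (by positivity)
    _ = c * δ * ∑ s ∈ Ico 0 t, γ ^ s := by
        rw [range_eq_Ico, mul_sum]; exact sum_congr rfl fun s _ => by ring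
    _ ≤ c * δ * (γ ^ 0 / (1 - γ)) := by gcongr; exact geom_sum_Ico_le_of_lt_one hγ0 hγ1
    _ = c * δ / (1 - γ) := by ring

end StableRecursion

section ClosedLoop

variable {ιp ιu ιy ιx : Type*} [Fintype ιp] [Fintype ιy] [Fintype ιx]
  (Ap : Matrix ιp ιp ℝ) (Bp : Matrix ιp ιu ℝ) (Cp : Matrix ιy ιp ℝ)
  (A : Matrix ιx ιx ℝ) (B : Matrix ιx ιy ℝ) (C : Matrix ιu ιx ℝ) (D : Matrix ιu ιy ℝ)

lemma closedLoop_output (xp : ιp → ℝ) (x : ιx → ℝ) (r : ιy → ℝ) :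
    C *ᵥ x + D *ᵥ (Cp *ᵥ xp + r) = fromCols (D * Cp) C *ᵥ Sum.elim xp x + D *ᵥ r := by
  rw [fromCols_mulVec_sumElim, mulVec_add, ← mulVec_mulVec]
  abel

variable [Fintype ιu]

lemma closedLoop_step (xp : ιp → ℝ) (x : ιx → ℝ) (r : ιy → ℝ) (d : ιx → ℝ) :
    Sum.elim (Ap *ᵥ xp + Bp *ᵥ (C *ᵥ x + D *ᵥ (Cp *ᵥ xp + r)))
        (A *ᵥ x + B *ᵥ (Cp *ᵥ xp + r) + d) =
      fromBlocks (Ap + Bp * D * Cp) (Bp * C) (B * Cp) A *ᵥ Sum.elim xp x +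
        (fromRows (Bp * D) B *ᵥ r + Sum.elim (0 : ιp → ℝ) d) := by
  rw [fromBlocks_mulVec, fromRows_mulVec]
  ext (i | i) <;> simp [mulVec_add, add_mulVec, ← mulVec_mulVec] <;> ring

variable [DecidableEq ιp] [DecidableEq ιy] [DecidableEq ιx]

theorem e2norm_sub_le_of_perturbed_closedLoop {c γ ρ σ : ℝ} (hc : 0 ≤ c) (hγ0 : 0 ≤ γ)
    (hγ1 : γ < 1)
    (hΦ : ∀ t : ℕ, ‖fromBlocks (Ap + Bp * D * Cp) (Bp * C) (B * Cp) A ^ t‖ ≤ c * γ ^ t)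
    {xp : ℕ → ιp → ℝ} {x : ℕ → ιx → ℝ} {u : ℕ → ιu → ℝ} {y : ℕ → ιy → ℝ}
    (hxp : ∀ t, xp (t + 1) = Ap *ᵥ xp t + Bp *ᵥ u t) (hy : ∀ t, y t = Cp *ᵥ xp t)
    (hx : ∀ t, x (t + 1) = A *ᵥ x t + B *ᵥ y t) (hu : ∀ t, u t = C *ᵥ x t + D *ᵥ y t)
    {xp' : ℕ → ιp → ℝ} {x' : ℕ → ιx → ℝ} {u' : ℕ → ιu → ℝ} {y' : ℕ → ιy → ℝ}
    (hxp0 : xp' 0 = xp 0) (hx0 : x' 0 = x 0)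
    (hxp' : ∀ t, xp' (t + 1) = Ap *ᵥ xp' t + Bp *ᵥ u' t)
    (hu' : ∀ t, u' t = C *ᵥ x' t + D *ᵥ y' t)
    (hy' : ∀ t, e2norm (y' t - Cp *ᵥ xp' t) ≤ ρ)
    (hx' : ∀ t, e2norm (x' (t + 1) - (A *ᵥ x' t + B *ᵥ y' t)) ≤ σ) (t : ℕ) :
    e2norm (u t - u' t) ≤
      ‖fromCols (D * Cp) C‖ * (c * (‖fromRows (Bp * D) B‖ * ρ + σ) / (1 - γ)) + ‖D‖ * ρ := by
  set r : ℕ → ιy → ℝ := fun t => y' t - Cp *ᵥ xp' t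
  set d : ℕ → ιx → ℝ := fun t => x' (t + 1) - (A *ᵥ x' t + B *ᵥ y' t)
  have hy'r : ∀ t, y' t = Cp *ᵥ xp' t + r t := fun t => (add_sub_cancel _ _).symm
  have hx'd : ∀ t, x' (t + 1) = A *ᵥ x' t + B *ᵥ (Cp *ᵥ xp' t + r t) + d t := fun t => by
    rw [← hy'r]; exact (add_sub_cancel _ _).symm
  set e : ℕ → ιp ⊕ ιx → ℝ := fun t => Sum.elim (xp t) (x t) - Sum.elim (xp' t) (x' t)
  have he : ∀ t, e (t + 1) = fromBlocks (Ap + Bp * D * Cp) (Bp * C) (B * Cp) A *ᵥ e t +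
      -(fromRows (Bp * D) B *ᵥ r t + Sum.elim (0 : ιp → ℝ) (d t)) := fun t => by
    have nominal := closedLoop_step Ap Bp Cp A B C D (xp t) (x t) 0 0
    have perturbed := closedLoop_step Ap Bp Cp A B C D (xp' t) (x' t) (r t) (d t)
    simp only [add_zero, mulVec_zero, Sum.elim_zero_zero] at nominal
    simp only [e, mulVec_sub, hxp, hxp', hx, hx'd, hu, hu', hy, hy'r, nominal, perturbed]
    abel
  have hq : ∀ t, e2norm (-(fromRows (Bp * D) B *ᵥ r t + Sum.elim (0 : ιp → ℝ) (d t))) ≤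
      ‖fromRows (Bp * D) B‖ * ρ + σ := fun t => by
    rw [e2norm_neg]
    refine (e2norm_add_le _ _).trans (add_le_add ?_ ?_)
    · exact (e2norm_mulVec_le _ _).trans (mul_le_mul_of_nonneg_left (hy' t) (norm_nonneg _))
    · rw [e2norm_sumElim_zero_left]; exact hx' t
  have hout : u t - u' t = fromCols (D * Cp) C *ᵥ e t - D *ᵥ r t := by
    have nominal := closedLoop_output Cp C D (xp t) (x t) 0
    simp only [add_zero, mulVec_zero] at nominal
    simp only [e, hu, hu', hy, hy'r, nominal, closedLoop_output, mulVec_sub]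
    abel
  have he0 : e 0 = 0 := by simp [e, hxp0, hx0]
  rw [hout]
  refine (e2norm_sub_le _ _).trans (add_le_add ?_ ?_)
  · exact (e2norm_mulVec_le _ _).trans (mul_le_mul_of_nonneg_left
      (e2norm_le_of_recurrence_of_pow_le _ hc hγ0 hγ1 hΦ he0 he hq t) (norm_nonneg _))
  · exact (e2norm_mulVec_le _ _).trans (mul_le_mul_of_nonneg_left (hy' t) (norm_nonneg _))

end ClosedLoop

section Quantization

variable {ι κ : Type*} [Fintype ι] [Fintype κ] {s : ℝ}

lemma abs_inv_mul_round_mul_sub_le (hs : 0 < s) (z : ℝ) :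
    |s⁻¹ * round (s * z) - z| ≤ s⁻¹ / 2 := by
  have h : s⁻¹ * round (s * z) - z = s⁻¹ * (round (s * z) - s * z) := by field_simp
  rw [h, abs_mul, abs_of_pos (inv_pos.2 hs), abs_sub_comm, div_eq_mul_one_div]
  exact mul_le_mul_of_nonneg_left (abs_sub_round _) (inv_nonneg.2 hs.le)

lemma abs_round_add_sub_le {z w : ℝ} (hw : |w| ≤ 1) : |round z + w - z| ≤ 3 / 2 := by
  have := abs_sub_round z
  rw [abs_sub_comm] at this
  calc |round z + w - z| = |(round z - z) + w| := by ring_nf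
    _ ≤ 1 / 2 + 1 := (abs_add_le _ _).trans (add_le_add this hw)
    _ = 3 / 2 := by norm_num

lemma e2norm_inv_smul_round_sub_le (hs : 0 < s) {v q : ι → ℝ}
    (hq : ∀ i, q i = round (s * v i)) :
    e2norm (s⁻¹ • q - v) ≤ √(Fintype.card ι) * (s⁻¹ / 2) :=
  e2norm_le_sqrt_card_mul (by positivity) fun i => by
    simpa [hq i] using abs_inv_mul_round_mul_sub_le hs (v i)

lemma e2norm_inv_smul_round_update_sub_le (hs : 0 < s) (A : Matrix ι ι ℝ) (B : Matrix ι κ ℝ)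
    {xt xt' w : ι → ℝ} {yb : κ → ℝ} (hw : ∀ i, |w i| ≤ 1)
    (h : ∀ i, xt' i = round (((s • A) *ᵥ xt + (s • B) *ᵥ yb) i / s) + w i) :
    e2norm (s⁻¹ • xt' - (A *ᵥ (s⁻¹ • xt) + B *ᵥ (s⁻¹ • yb))) ≤
      √(Fintype.card ι) * (s⁻¹ * (3 / 2)) := by
  refine e2norm_le_sqrt_card_mul (by positivity) fun i => ?_
  set z := (A *ᵥ xt + B *ᵥ yb) i
  have hz : ((s • A) *ᵥ xt + (s • B) *ᵥ yb) i / s = z := by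
    rw [smul_mulVec, smul_mulVec, ← smul_add, Pi.smul_apply, smul_eq_mul,
      mul_div_cancel_left₀ _ hs.ne']
  have hi : (s⁻¹ • xt' - (A *ᵥ (s⁻¹ • xt) + B *ᵥ (s⁻¹ • yb))) i =
      s⁻¹ * (round z + w i - z) := by
    rw [mulVec_smul, mulVec_smul, ← smul_add, ← smul_sub, Pi.smul_apply, Pi.sub_apply, h i, hz,
      smul_eq_mul]
  rw [hi, abs_mul, abs_of_pos (inv_pos.2 hs)]
  exact mul_le_mul_of_nonneg_left (abs_round_add_sub_le (hw i)) (inv_nonneg.2 hs.le)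

lemma inv_sq_smul_scaled_mulVec_add (hs : s ≠ 0) {μ : Type*} (C : Matrix μ ι ℝ)
    (D : Matrix μ κ ℝ) (xt : ι → ℝ) (yb : κ → ℝ) :
    s⁻¹ ^ 2 • ((s • C) *ᵥ xt + (s • D) *ᵥ yb) = C *ᵥ (s⁻¹ • xt) + D *ᵥ (s⁻¹ • yb) := by
  rw [smul_mulVec, smul_mulVec, mulVec_smul, mulVec_smul, ← smul_add, ← smul_add, smul_smul,
    sq, inv_mul_cancel_right₀ hs]

end Quantization

lemma perturbation_bound_le_of_budget {s ε c γ G U Dn a b : ℝ} (hs : 0 < s) (hc : 1 ≤ c) (hγ0 : 0 ≤ γ)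
    (hγ1 : γ < 1) (hU : 0 ≤ U) (hDn : 0 ≤ Dn) (ha : 0 ≤ a) (hb : 0 ≤ b)
    (hbudget : s * ε ≥ c / (1 - γ) * (a / 2 * (G * U + Dn) + 2 * b * U)) :
    U * (c * (G * (a * (s⁻¹ / 2)) + b * (s⁻¹ * (3 / 2))) / (1 - γ)) + Dn * (a * (s⁻¹ / 2)) ≤ ε := by
  set K := c / (1 - γ)
  have hK : 1 ≤ K := (le_div_iff₀ (by linarith)).2 (by linarith)
  calc U * (c * (G * (a * (s⁻¹ / 2)) + b * (s⁻¹ * (3 / 2))) / (1 - γ)) + Dn * (a * (s⁻¹ / 2))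
      = s⁻¹ * (K * (a / 2 * (G * U) + 3 / 2 * b * U) + a / 2 * Dn) := by ring
    _ ≤ s⁻¹ * (K * (a / 2 * (G * U + Dn) + 2 * b * U)) := by
        -- `K ≥ 1` absorbs the feed-through term `a / 2 * Dn`, and `3 / 2 ≤ 2`
        gcongr
        nlinarith [mul_le_mul_of_nonneg_right hK (by positivity : 0 ≤ a / 2 * Dn),
          mul_nonneg (mul_nonneg (by linarith : 0 ≤ K) hb) hU]
    _ ≤ s⁻¹ * (s * ε) := by gcongr
    _ = ε := inv_mul_cancel_left₀ hs.ne' ε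

theorem stmt_12_general (np n m p ℓ : ℕ)
    (Ap : Matrix (Fin np) (Fin np) ℝ) (Bp : Matrix (Fin np) (Fin m) ℝ)
    (Cp : Matrix (Fin p) (Fin np) ℝ)
    (A : Matrix (Fin n) (Fin n) ℝ) (B : Matrix (Fin n) (Fin p) ℝ)
    (C : Matrix (Fin m) (Fin n) ℝ) (D : Matrix (Fin m) (Fin p) ℝ)
    (xp0 : Fin np → ℝ) (x0 : Fin n → ℝ)
    -- nominal closed loop
    (xp : ℕ → Fin np → ℝ) (x : ℕ → Fin n → ℝ) (u : ℕ → Fin m → ℝ) (y : ℕ → Fin p → ℝ)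
    (hxp0 : xp 0 = xp0) (hx0' : x 0 = x0)
    (hxp : ∀ t : ℕ, xp (t + 1) = Ap.mulVec (xp t) + Bp.mulVec (u t))
    (hy : ∀ t : ℕ, y t = Cp.mulVec (xp t))
    (hx : ∀ t : ℕ, x (t + 1) = A.mulVec (x t) + B.mulVec (y t))
    (hu : ∀ t : ℕ, u t = C.mulVec (x t) + D.mulVec (y t))
    -- encrypted closed loop
    (w : ℕ → Fin n → ℝ) (hw : ∀ t i, w t i ∈ ({-1, 0, 1} : Set ℝ))
    (xph : ℕ → Fin np → ℝ) (xt : ℕ → Fin n → ℝ) (ut : ℕ → Fin m → ℝ)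
    (uh : ℕ → Fin m → ℝ) (yh : ℕ → Fin p → ℝ) (yb : ℕ → Fin p → ℝ)
    (hxph0 : xph 0 = xp0) (hxt0 : xt 0 = (2 : ℝ) ^ ℓ • x0)
    (hyh : ∀ t : ℕ, yh t = Cp.mulVec (xph t))
    (hyb : ∀ t : ℕ, ∀ i, yb t i = (round ((2 : ℝ) ^ ℓ * yh t i) : ℤ))
    (hxt : ∀ t : ℕ, ∀ i, xt (t + 1) i =
      ((round (((((2 : ℝ) ^ ℓ • A).mulVec (xt t) +
          ((2 : ℝ) ^ ℓ • B).mulVec (yb t)) i) / (2 : ℝ) ^ ℓ) : ℤ) : ℝ) + w t i)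
    (hut : ∀ t : ℕ, ut t =
      ((2 : ℝ) ^ ℓ • C).mulVec (xt t) + ((2 : ℝ) ^ ℓ • D).mulVec (yb t))
    (huh : ∀ t : ℕ, uh t = (2 : ℝ) ^ (-(2 * ℓ : ℤ)) • ut t)
    (hxph : ∀ t : ℕ, xph (t + 1) = Ap.mulVec (xph t) + Bp.mulVec (uh t))
    -- stability of the closed loop
    (c γ : ℝ) (hc : 1 ≤ c) (hγ0 : 0 < γ) (hγ1 : γ < 1)
    (hΦ : ∀ t : ℕ,
      ‖(Matrix.fromBlocks (Ap + Bp * D * Cp) (Bp * C) (B * Cp) A) ^ t‖ ≤ c * γ ^ t) :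
    ∀ ε : ℝ, 0 < ε →
      (2 : ℝ) ^ ℓ * ε ≥ (c / (1 - γ)) *
        ((Real.sqrt p / 2) *
            (‖Matrix.fromRows (Bp * D) B‖ * ‖Matrix.fromCols (D * Cp) C‖ + ‖D‖) +
          2 * Real.sqrt n * ‖Matrix.fromCols (D * Cp) C‖) →
      ∀ t : ℕ, e2norm (u t - uh t) ≤ ε := by
  intro ε _ hbudget t
  have hzpow : (2 : ℝ) ^ (-(2 * ℓ : ℤ)) = ((2 : ℝ) ^ ℓ)⁻¹ ^ 2 := by
    rw [_root_.zpow_neg, mul_comm, _root_.zpow_mul, zpow_natCast, zpow_ofNat, inv_pow]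
  set s : ℝ := 2 ^ ℓ
  have hs : 0 < s := by positivity
  have hw1 : ∀ t i, |w t i| ≤ 1 := fun t i => by
    rcases hw t i with h | h | h <;> rw [h] <;> norm_num
  have huh' : ∀ t, uh t = C *ᵥ (s⁻¹ • xt t) + D *ᵥ (s⁻¹ • yb t) := fun t => by
    rw [huh, hut, hzpow, inv_sq_smul_scaled_mulVec_add hs.ne']
  have herr := e2norm_sub_le_of_perturbed_closedLoop Ap Bp Cp A B C D (by linarith) hγ0.le hγ1
    hΦ hxp hy hx hu (x' := fun t => s⁻¹ • xt t) (y' := fun t => s⁻¹ • yb t)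
    (hxph0.trans hxp0.symm) (by simp [hxt0, hx0', smul_smul, hs.ne']) hxph huh'
    (fun t => hyh t ▸ e2norm_inv_smul_round_sub_le hs (hyb t))
    (fun t => e2norm_inv_smul_round_update_sub_le hs A B (hw1 t) (hxt t)) t
  simp only [Fintype.card_fin] at herr
  exact herr.trans (perturbation_bound_le_of_budget hs hc hγ0.le hγ1 (norm_nonneg _) (norm_nonneg _)
    (Real.sqrt_nonneg _) (Real.sqrt_nonneg _) hbudget)

/-- Theorem 1, performance of the two-party encrypted controller:
With controller data in `Q_{k,ℓ}` (`k > ℓ ≥ 1`), the nominal closed loop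
`(x_p, x, u, y)`, the encrypted closed loop `(x̂_p, x̃, ũ, û, ŷ, ȳ)` with arbitrary
truncation errors `w(t) ∈ {−1,0,1}^n`, and `‖Φ^t‖ ≤ c γ^t` (`c ≥ 1`, `γ ∈ (0,1)`,
induced 2-norm), it holds for every `ε > 0` satisfying
`2^ℓ ε ≥ (c/(1−γ))·((√p/2)(‖Γ‖‖Υ‖ + ‖D‖) + 2√n ‖Υ‖)` that
`‖u(t) − û(t)‖ ≤ ε` for all `t ∈ ℕ`. -/
theorem stmt_12 (np n m p k ℓ : ℕ)
    (hnp : 1 ≤ np) (hn : 1 ≤ n) (hm : 1 ≤ m) (hp : 1 ≤ p)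
    (hℓ : 1 ≤ ℓ) (hkℓ : ℓ < k)
    (Ap : Matrix (Fin np) (Fin np) ℝ) (Bp : Matrix (Fin np) (Fin m) ℝ)
    (Cp : Matrix (Fin p) (Fin np) ℝ)
    (A : Matrix (Fin n) (Fin n) ℝ) (B : Matrix (Fin n) (Fin p) ℝ)
    (C : Matrix (Fin m) (Fin n) ℝ) (D : Matrix (Fin m) (Fin p) ℝ)
    (xp0 : Fin np → ℝ) (x0 : Fin n → ℝ)
    (hA : ∀ i j, A i j ∈ Qfix k ℓ) (hB : ∀ i j, B i j ∈ Qfix k ℓ)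
    (hC : ∀ i j, C i j ∈ Qfix k ℓ) (hD : ∀ i j, D i j ∈ Qfix k ℓ)
    (hx0 : ∀ i, x0 i ∈ Qfix k ℓ)
    -- nominal closed loop
    (xp : ℕ → Fin np → ℝ) (x : ℕ → Fin n → ℝ) (u : ℕ → Fin m → ℝ) (y : ℕ → Fin p → ℝ)
    (hxp0 : xp 0 = xp0) (hx0' : x 0 = x0)
    (hxp : ∀ t : ℕ, xp (t + 1) = Ap.mulVec (xp t) + Bp.mulVec (u t))
    (hy : ∀ t : ℕ, y t = Cp.mulVec (xp t))
    (hx : ∀ t : ℕ, x (t + 1) = A.mulVec (x t) + B.mulVec (y t))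
    (hu : ∀ t : ℕ, u t = C.mulVec (x t) + D.mulVec (y t))
    -- encrypted closed loop
    (w : ℕ → Fin n → ℝ) (hw : ∀ t i, w t i ∈ ({-1, 0, 1} : Set ℝ))
    (xph : ℕ → Fin np → ℝ) (xt : ℕ → Fin n → ℝ) (ut : ℕ → Fin m → ℝ)
    (uh : ℕ → Fin m → ℝ) (yh : ℕ → Fin p → ℝ) (yb : ℕ → Fin p → ℝ)
    (hxph0 : xph 0 = xp0) (hxt0 : xt 0 = (2 : ℝ) ^ ℓ • x0)
    (hyh : ∀ t : ℕ, yh t = Cp.mulVec (xph t))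
    (hyb : ∀ t : ℕ, ∀ i, yb t i = (round ((2 : ℝ) ^ ℓ * yh t i) : ℤ))
    (hxt : ∀ t : ℕ, ∀ i, xt (t + 1) i =
      ((round (((((2 : ℝ) ^ ℓ • A).mulVec (xt t) +
          ((2 : ℝ) ^ ℓ • B).mulVec (yb t)) i) / (2 : ℝ) ^ ℓ) : ℤ) : ℝ) + w t i)
    (hut : ∀ t : ℕ, ut t =
      ((2 : ℝ) ^ ℓ • C).mulVec (xt t) + ((2 : ℝ) ^ ℓ • D).mulVec (yb t))
    (huh : ∀ t : ℕ, uh t = (2 : ℝ) ^ (-(2 * ℓ : ℤ)) • ut t)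
    (hxph : ∀ t : ℕ, xph (t + 1) = Ap.mulVec (xph t) + Bp.mulVec (uh t))
    -- stability of the closed loop
    (c γ : ℝ) (hc : 1 ≤ c) (hγ0 : 0 < γ) (hγ1 : γ < 1)
    (hΦ : ∀ t : ℕ,
      ‖(Matrix.fromBlocks (Ap + Bp * D * Cp) (Bp * C) (B * Cp) A) ^ t‖ ≤ c * γ ^ t) :
    ∀ ε : ℝ, 0 < ε →
      (2 : ℝ) ^ ℓ * ε ≥ (c / (1 - γ)) *
        ((Real.sqrt p / 2) *
            (‖Matrix.fromRows (Bp * D) B‖ * ‖Matrix.fromCols (D * Cp) C‖ + ‖D‖) +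
          2 * Real.sqrt n * ‖Matrix.fromCols (D * Cp) C‖) →
      ∀ t : ℕ, e2norm (u t - uh t) ≤ ε :=
  stmt_12_general np n m p ℓ Ap Bp Cp A B C D xp0 x0 xp x u y hxp0 hx0' hxp hy hx hu w hw xph xt ut
    uh yh yb hxph0 hxt0 hyh hyb hxt hut huh hxph c γ hc hγ0 hγ1 hΦ
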